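/- Let Σ be an alphabet. If L ∈ RevL(ZMod 2, Σ), then the complement (List Σ) \ L also belongs to RevL(ZMod 2, Σ). -/

import Mathlib

open Matrix

namespace RevWA

/-- A weighted automaton over a semiring `S` and alphabet `α`, given by a linear
representation: number of states `n`, initial weight vector, transition matrices,
and final weight vector. -/
structure WA (S : Type) [Semiring S] (α : Type) where
  n : ℕ
  init : Fin n → S
  trans : α → Matrix (Fin n) (Fin n) S
  final : Fin n → S

variable {S : Type} [Semiring S] {α : Type}

/-- The matrix associated to a word: product of the transition matrices of its letters. -/
def WA.matWord (A : WA S α) (w : List α) : Matrix (Fin A.n) (Fin A.n) S :=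
  (w.map A.trans).prod

/-- The series realized by a weighted automaton: `i ⬝ μ(w) ⬝ f`. -/
def WA.series (A : WA S α) : List α → S :=
  fun w => A.init ⬝ᵥ (A.matWord w).mulVec A.final

/-- A matrix has at most one nonzero entry in each row. -/
def rowOk {n : ℕ} (M : Matrix (Fin n) (Fin n) S) : Prop :=
  ∀ i j j', M i j ≠ 0 → M i j' ≠ 0 → j = j'

/-- A matrix has at most one nonzero entry in each column. -/
def colOk {n : ℕ} (M : Matrix (Fin n) (Fin n) S) : Prop :=
  ∀ i i' j, M i j ≠ 0 → M i' j ≠ 0 → i = i'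

/-- A weighted automaton is reversible if each transition matrix has at most one
nonzero entry in each row and at most one nonzero entry in each column. -/
def WA.Reversible (A : WA S α) : Prop :=
  ∀ a : α, rowOk (A.trans a) ∧ colOk (A.trans a)

/-- A weighted automaton has exactly one initial state. -/
def WA.OneInitial (A : WA S α) : Prop :=
  ∃! q : Fin A.n, A.init q ≠ 0

/-- `Rev S α`: series realized by reversible weighted automata over `S` and `α`. -/
def Rev (S : Type) [Semiring S] (α : Type) : Set (List α → S) :=
  {r | ∃ A : WA S α, A.Reversible ∧ A.series = r}

/-- `Rev₁ S α`: series realized by reversible weighted automata over `S` and `α`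
with exactly one initial state. -/
def Rev1 (S : Type) [Semiring S] (α : Type) : Set (List α → S) :=
  {r | ∃ A : WA S α, A.Reversible ∧ A.OneInitial ∧ A.series = r}

/-- The support of a series. -/
def supp (r : List α → S) : Set (List α) :=
  {w | r w ≠ 0}

/-- `RevL S α`: supports of series realized by reversible weighted automata. -/
def RevL (S : Type) [Semiring S] (α : Type) : Set (Set (List α)) :=
  {L | ∃ r ∈ Rev S α, supp r = L}

/-- `RevL₁ S α`: supports of series realized by reversible weighted automata with
exactly one initial state. -/
def RevL1 (S : Type) [Semiring S] (α : Type) : Set (Set (List α)) :=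
  {L | ∃ r ∈ Rev1 S α, supp r = L}

/-- The characteristic series of a language `L` over `S`. -/
noncomputable def charSeries (S : Type) [Semiring S] {α : Type} (L : Set (List α)) :
    List α → S :=
  L.indicator 1

/-- A reversible nondeterministic finite automaton: deterministic and
codeterministic transition relation. -/
structure RevNFA (α : Type) where
  Q : Type
  fintypeQ : Fintype Q
  δ : Q → α → Q → Prop
  I : Set Q
  F : Set Q
  det : ∀ p a q q', δ p a q → δ p a q' → q = q'
  codet : ∀ p p' a q, δ p a q → δ p' a q → p = p'

/-- Paths in a reversible NFA. -/
inductive RevNFA.Path {α : Type} (A : RevNFA α) : A.Q → List α → A.Q → Prop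
  | nil (q : A.Q) : RevNFA.Path A q [] q
  | cons {p q r : A.Q} {a : α} {w : List α} :
      A.δ p a q → RevNFA.Path A q w r → RevNFA.Path A p (a :: w) r

/-- The language recognized by a reversible NFA. -/
def RevNFA.lang {α : Type} (A : RevNFA α) : Set (List α) :=
  {w | ∃ p ∈ A.I, ∃ q ∈ A.F, A.Path p w q}

/-- A reversible NFA has exactly one initial state. -/
def RevNFA.OneInitial {α : Type} (A : RevNFA α) : Prop :=
  ∃ q : A.Q, A.I = {q}

/-- `RevL(𝔹,α)`: languages recognized by reversible NFAs. -/
def RevLB (α : Type) : Set (Set (List α)) :=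
  {L | ∃ A : RevNFA α, A.lang = L}

/-- `RevL₁(𝔹,α)`: languages recognized by reversible NFAs with exactly one
initial state. -/
def RevL1B (α : Type) : Set (Set (List α)) :=
  {L | ∃ A : RevNFA α, A.OneInitial ∧ A.lang = L}

end RevWA

/-! Over `ZMod 2` a weight is nonzero iff adding `1` makes it zero, so the complement of
`supp r` is `supp (r + 1)`. The series `r + 1` is realized by the disjoint union of an automaton
for `r` with the one-state automaton of constant weight `1`, and a disjoint union of reversible
automata is reversible: its transition matrices are block diagonal. -/

namespace RevWA

variable {S : Type} [Semiring S] {α : Type}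

section BlockDiagonal

variable {m n : ℕ}

def blockDiag (M : Matrix (Fin m) (Fin m) S) (N : Matrix (Fin n) (Fin n) S) :
    Matrix (Fin (m + n)) (Fin (m + n)) S :=
  (fromBlocks M 0 0 N).submatrix finSumFinEquiv.symm finSumFinEquiv.symm

lemma blockDiag_one :
    blockDiag (1 : Matrix (Fin m) (Fin m) S) (1 : Matrix (Fin n) (Fin n) S) = 1 := by
  simp [blockDiag, fromBlocks_one, submatrix_one_equiv]

lemma blockDiag_mul (M M' : Matrix (Fin m) (Fin m) S) (N N' : Matrix (Fin n) (Fin n) S) :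
    blockDiag M N * blockDiag M' N' = blockDiag (M * M') (N * N') := by
  simp [blockDiag, submatrix_mul_equiv, fromBlocks_multiply]

lemma rowOk_blockDiag {M : Matrix (Fin m) (Fin m) S} {N : Matrix (Fin n) (Fin n) S}
    (hM : rowOk M) (hN : rowOk N) : rowOk (blockDiag M N) := by
  intro i j j' h h'
  obtain ⟨i, rfl⟩ := finSumFinEquiv.surjective i
  obtain ⟨j, rfl⟩ := finSumFinEquiv.surjective j
  obtain ⟨j', rfl⟩ := finSumFinEquiv.surjective j'
  simp only [blockDiag, submatrix_apply, Equiv.symm_apply_apply] at h h'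
  rw [finSumFinEquiv.injective.eq_iff]
  rcases i with p | p <;> rcases j with q | q <;> rcases j' with q' | q' <;>
    simp_all
  exacts [hM p q q' h h', hN p q q' h h']

lemma colOk_blockDiag {M : Matrix (Fin m) (Fin m) S} {N : Matrix (Fin n) (Fin n) S}
    (hM : colOk M) (hN : colOk N) : colOk (blockDiag M N) := by
  intro i i' j h h'
  obtain ⟨i, rfl⟩ := finSumFinEquiv.surjective i
  obtain ⟨i', rfl⟩ := finSumFinEquiv.surjective i'
  obtain ⟨j, rfl⟩ := finSumFinEquiv.surjective j
  simp only [blockDiag, submatrix_apply, Equiv.symm_apply_apply] at h h'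
  rw [finSumFinEquiv.injective.eq_iff]
  rcases i with p | p <;> rcases i' with p' | p' <;> rcases j with q | q <;>
    simp_all
  exacts [hM p p' q h h', hN p p' q h h']

lemma blockDiag_dotProduct_mulVec (u v : Fin m → S) (u' v' : Fin n → S)
    (M : Matrix (Fin m) (Fin m) S) (N : Matrix (Fin n) (Fin n) S) :
    (Sum.elim u u' ∘ finSumFinEquiv.symm) ⬝ᵥ
        (blockDiag M N *ᵥ (Sum.elim v v' ∘ finSumFinEquiv.symm))
      = u ⬝ᵥ M *ᵥ v + u' ⬝ᵥ N *ᵥ v' := by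
  rw [blockDiag, submatrix_mulVec_equiv, Equiv.symm_symm, Function.comp_assoc,
    Equiv.symm_comp_self, Function.comp_id, comp_equiv_dotProduct_comp_equiv, fromBlocks_mulVec]
  simp [dotProduct, Fintype.sum_sum_type]

end BlockDiagonal

namespace WA

lemma matWord_cons (A : WA S α) (a : α) (w : List α) :
    A.matWord (a :: w) = A.trans a * A.matWord w := List.prod_cons

def add (A B : WA S α) : WA S α where
  n := A.n + B.n
  init := Sum.elim A.init B.init ∘ finSumFinEquiv.symm
  trans a := blockDiag (A.trans a) (B.trans a)
  final := Sum.elim A.final B.final ∘ finSumFinEquiv.symm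

lemma matWord_add (A B : WA S α) (w : List α) :
    (A.add B).matWord w = blockDiag (A.matWord w) (B.matWord w) := by
  induction w with
  | nil => exact blockDiag_one.symm
  | cons a w ih => rw [matWord_cons, matWord_cons, matWord_cons, ih]; exact blockDiag_mul ..

lemma series_add (A B : WA S α) : (A.add B).series = A.series + B.series := by
  funext w
  simp only [series, Pi.add_apply, matWord_add]
  exact blockDiag_dotProduct_mulVec ..

lemma Reversible.add {A B : WA S α} (hA : A.Reversible) (hB : B.Reversible) :
    (A.add B).Reversible :=
  fun a => ⟨rowOk_blockDiag (hA a).1 (hB a).1, colOk_blockDiag (hA a).2 (hB a).2⟩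

def one : WA S α where
  n := 1
  init := 1
  trans _ := 1
  final := 1

lemma series_one : (one : WA S α).series = 1 := by
  funext w
  have : (one : WA S α).matWord w = 1 :=
    List.prod_eq_one fun _ hx => by obtain ⟨a, -, rfl⟩ := List.mem_map.1 hx; rfl
  rw [series, this, one_mulVec]
  exact (Fin.sum_univ_one _).trans (mul_one 1)

lemma reversible_one : (one : WA S α).Reversible := fun _ =>
  ⟨fun _ j j' _ _ => Subsingleton.elim (α := Fin 1) j j',
    fun i i' _ _ _ => Subsingleton.elim (α := Fin 1) i i'⟩

end WA

lemma add_mem_Rev {r s : List α → S} (hr : r ∈ Rev S α) (hs : s ∈ Rev S α) :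
    r + s ∈ Rev S α := by
  obtain ⟨A, hA, rfl⟩ := hr
  obtain ⟨B, hB, rfl⟩ := hs
  exact ⟨A.add B, hA.add hB, WA.series_add A B⟩

lemma one_mem_Rev : (1 : List α → S) ∈ Rev S α :=
  ⟨WA.one, WA.reversible_one, WA.series_one⟩

lemma supp_add_one_zmod_two (r : List α → ZMod 2) : supp (r + 1) = (supp r)ᶜ := by
  ext w
  simp only [supp, Set.mem_ofPred_eq, Set.mem_compl_iff, Pi.add_apply, Pi.one_apply, not_not]
  generalize r w = x
  revert x
  decide

end RevWA

open RevWA in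
theorem stmt6_general (α : Type)
    (L : Set (List α)) (hL : L ∈ RevL (ZMod 2) α) :
    Lᶜ ∈ RevL (ZMod 2) α := by
  obtain ⟨r, hr, rfl⟩ := hL
  exact ⟨r + 1, add_mem_Rev hr one_mem_Rev, supp_add_one_zmod_two r⟩

open RevWA in
theorem stmt6 (α : Type) [Fintype α] [Nonempty α]
    (L : Set (List α)) (hL : L ∈ RevL (ZMod 2) α) :
    Lᶜ ∈ RevL (ZMod 2) α :=
  stmt6_general α L hL
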